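/- arXiv:1103.4253 — 3 statements merged into one kernel-verified Lean document; each statement's English description precedes it below -/
import Mathlib

section
/- For every positive even integer D and all θ, θ' ∈ {0,1}^D: KL(f_θ, f_{θ'}) ≤ (5ξα / (4A²)) D^{−2β}. -/
open MeasureTheory

/-- The Gaussian kernel `ψ(x) = π^{-1/2} exp(-x²)`. -/
noncomputable def gaussK (x : ℝ) : ℝ := (Real.sqrt Real.pi)⁻¹ * Real.exp (-x ^ 2)

/-- The largest integer strictly smaller than `β` (for `β > 0`). -/
noncomputable def rOf (β : ℝ) : ℕ := ⌈β⌉₊ - 1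

/-- The perturbed density `f_θ = ω + Σ_{j=1}^D (2θ_j − 1) φ_j`, where
`φ_j(x) = (ξ D^{−β}/A) φ((D/α)(x + α/2) − (j−1))`. -/
noncomputable def fTheta (α ξ β A : ℝ) (φ ω : ℝ → ℝ) (D : ℕ) (θ : Fin D → Fin 2) : ℝ → ℝ :=
  fun x => ω x + ∑ j : Fin D, (2 * ((θ j : ℕ) : ℝ) - 1) *
    (ξ * (D : ℝ) ^ (-β) / A * φ ((D : ℝ) / α * (x + α / 2) - (j : ℝ)))

/-- Kullback-Leibler divergence (as an integral). -/
noncomputable def KLdiv (s t : ℝ → ℝ) : ℝ := ∫ x, s x * Real.log (s x / t x)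

/-- Squared Hellinger distance. -/
noncomputable def hellSq (g h : ℝ → ℝ) : ℝ :=
  (1 / 2) * ∫ x, (Real.sqrt (g x) - Real.sqrt (h x)) ^ 2

lemma logbound (w : ℝ) (hw : |w| ≤ 1/4) :
    (1+w) * (Real.log (1+w) - Real.log (1-w)) ≤ 2*w + 5/2 * w^2 := by
  have hw1 : |w| < 1 := lt_of_le_of_lt hw (by norm_num)
  have h1 := Real.abs_log_sub_add_sum_range_le hw1 3
  have hw1' : |(-w)| < 1 := by rwa [abs_neg]
  have h2 := Real.abs_log_sub_add_sum_range_le hw1' 3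
  simp only [Finset.sum_range_succ, Finset.sum_range_zero] at h1 h2
  rw [abs_le] at h1 h2
  rw [abs_neg w] at h2
  have hq0 : (0:ℝ) ≤ |w| := abs_nonneg w
  have hwle : w ≤ |w| := le_abs_self w
  have hwge : -|w| ≤ w := neg_abs_le w
  have hsq : w^2 = |w|^2 := (sq_abs w).symm
  have hden : (0:ℝ) < 1 - |w| := by linarith
  have hE' : |w|^(3+1)/(1-|w|) ≤ (4/3) * |w|^4 := by
    rw [div_le_iff₀ hden]
    nlinarith [pow_nonneg hq0 4]
  set a := Real.log (1 - w) with ha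
  set b := Real.log (1 - (-w)) with hb
  have hb' : Real.log (1 + w) = b := by rw [hb]; ring_nf
  rw [hb']
  set E := |w|^(3+1)/(1-|w|) with hEdef
  have hE0 : 0 ≤ E := div_nonneg (pow_nonneg hq0 4) (le_of_lt hden)
  have e1l := h1.1; have e2r := h2.2
  push_cast at e1l e2r
  have hba : b - a ≤ 2*E + 2*w + (2/3)*w^3 := by nlinarith [e1l, e2r]
  have hwab := abs_le.mp hw
  have step1 : (1+w) * (b - a) ≤ (1+w) * (2*E + 2*w + (2/3)*w^3) :=
    mul_le_mul_of_nonneg_left hba (by linarith [hwab.1])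
  refine step1.trans ?_
  have h4 : |w|^4 ≤ (1/4) * |w|^3 := by
    calc |w|^4 = |w| * |w|^3 := by ring
    _ ≤ (1/4) * |w|^3 := mul_le_mul_of_nonneg_right hw (pow_nonneg hq0 3)
  have h3 : |w|^3 ≤ (1/4) * w^2 := by
    calc |w|^3 = |w| * |w|^2 := by ring
    _ ≤ (1/4) * |w|^2 := mul_le_mul_of_nonneg_right hw (pow_nonneg hq0 2)
    _ = (1/4) * w^2 := by rw [← hsq]
  have hw3 : w^3 ≤ |w|^3 := by
    calc w^3 ≤ |w^3| := le_abs_self _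
    _ = |w|^3 := abs_pow w 3
  have hw4 : w^4 = |w|^4 := by rw [← abs_pow]; exact (abs_of_nonneg (by positivity)).symm
  have hEb : (1+w)*E ≤ (5/12) * |w|^3 := by
    have h5 : (1+w)*E ≤ (5/4)*((4/3) * |w|^4) := by
      apply mul_le_mul (by linarith [hwab.2]) hE' hE0 (by norm_num)
    calc (1+w)*E ≤ (5/4)*((4/3) * |w|^4) := h5
    _ = (5/3) * |w|^4 := by ring
    _ ≤ (5/3) * ((1/4) * |w|^3) := by linarith [h4]
    _ = (5/12) * |w|^3 := by ring
  have expand : (1+w)*(2*E+2*w+(2/3)*w^3)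
      = 2*w + 2*w^2 + (2/3)*w^3 + (2/3)*w^4 + 2*((1+w)*E) := by ring
  rw [expand]
  linarith [hw3, h4, h3, hEb, hw4.le, hw4.ge]

lemma ptwise (ξ v : ℝ) (hξ : 0 < ξ) (hv : |v| ≤ ξ/2) :
    (2*ξ+v) * Real.log ((2*ξ+v)/(2*ξ-v)) ≤ 2*v + 5/(4*ξ) * v^2 := by
  have hξ' : ξ ≠ 0 := ne_of_gt hξ
  set w := v/(2*ξ) with hwdef
  have hv' : v = 2*ξ*w := by rw [hwdef]; field_simp
  have habs : |v| = 2*ξ*|w| := by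
    rw [hv', abs_mul, abs_of_pos (by linarith : (0:ℝ) < 2*ξ)]
  have hw : |w| ≤ 1/4 := by
    rw [habs] at hv
    nlinarith [abs_nonneg w]
  have hwab := abs_le.mp hw
  have h1 : 0 < 1 + w := by linarith [hwab.1]
  have h2 : 0 < 1 - w := by linarith [hwab.2]
  have hrw : (2*ξ+v)/(2*ξ-v) = (1+w)/(1-w) := by
    rw [hv', div_eq_div_iff (by nlinarith) (by nlinarith)]; ring
  have key := logbound w hw
  rw [hrw, Real.log_div (ne_of_gt h1) (ne_of_gt h2), hv']
  have expand : 2*ξ + 2*ξ*w = 2*ξ*(1+w) := by ring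
  rw [expand]
  have step : 2*ξ*(1+w) * (Real.log (1+w) - Real.log (1-w)) ≤ 2*ξ*(2*w + 5/2*w^2) := by
    rw [mul_assoc]
    exact mul_le_mul_of_nonneg_left key (by linarith)
  refine step.trans (le_of_eq ?_)
  field_simp
  ring

lemma sum_sq_of_unique {n : ℕ} (a : Fin n → ℝ) (h : ∀ i j, a i ≠ 0 → a j ≠ 0 → i = j) :
    (∑ i, a i)^2 = ∑ i, (a i)^2 := by
  by_cases hex : ∃ i, a i ≠ 0
  · obtain ⟨i, hi⟩ := hex
    have h1 : ∑ j, a j = a i := Finset.sum_eq_single_of_mem i (Finset.mem_univ i)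
      (fun b _ hb => by
        by_contra hb0
        exact hb (h b i hb0 hi))
    have h2 : ∑ j, (a j)^2 = (a i)^2 := Finset.sum_eq_single_of_mem i (Finset.mem_univ i)
      (fun b _ hb => by
        rcases eq_or_ne (a b) 0 with h0 | h0
        · rw [h0]; ring
        · exact absurd (h b i h0 hi) hb)
    rw [h1, h2]
  · push_neg at hex
    simp [hex]

lemma int_comp_affine (f : ℝ → ℝ) (c e : ℝ) :
    ∫ x, f (c * x + e) = |c⁻¹| * ∫ y, f y := by
  have h1 := MeasureTheory.Measure.integral_comp_mul_left (fun y => f (y + e)) c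
  rw [h1, MeasureTheory.integral_add_right_eq_self f e, smul_eq_mul]

set_option maxHeartbeats 1600000 in
/-- Lemma 6: `KL(f_θ, f_θ') ≤ (5ξα/(4A²)) D^{−2β}`. -/
theorem stmt9 (α ξ β : ℝ) (hα : 0 < α) (hξ : 0 < ξ) (hβ : 0 < β)
    (φ : ℝ → ℝ) (hφ : ContDiff ℝ (⊤ : ℕ∞) φ)
    (hsupp : tsupport φ ⊆ Set.Ioo (1 / 4 : ℝ) (3 / 4))
    (hint : (∫ x, φ x) = 0) (hsq : (∫ x, (φ x) ^ 2) = 1)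
    (A : ℝ) (hA1 : 1 < A) (hA2 : ∀ k ≤ rOf β + 1, ∀ x, |iteratedDeriv k φ x| ≤ A)
    (ω : ℝ → ℝ) (Mt : ℝ) (hMt : 0 < Mt)
    (hω0 : ∀ x, 0 ≤ ω x) (hωi : Integrable ω) (hω1 : (∫ x, ω x) = 1)
    (hωmono : MonotoneOn ω (Set.Iio (-(α / 2)))) (hωanti : AntitoneOn ω (Set.Ioi (α / 2)))
    (hωflat : ∀ x ∈ Set.Icc (-(3 * α / 4)) (3 * α / 4), ω x = 2 * ξ)
    (hωa : ω (-α) = ξ) (hωb : ω α = ξ)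
    (hωM : ∀ x, ω x ≤ Mt * gaussK x)
    (D : ℕ) (hD : 0 < D) (hDeven : Even D) (θ θ' : Fin D → Fin 2) :
    KLdiv (fTheta α ξ β A φ ω D θ) (fTheta α ξ β A φ ω D θ') ≤
      5 * ξ * α / (4 * A ^ 2) * (D : ℝ) ^ (-(2 * β)) := by
  classical
  have hA0 : (0:ℝ) < A := by linarith
  have hD0 : (0:ℝ) < (D:ℝ) := by exact_mod_cast hD
  set m : ℝ := (D:ℝ) ^ (-β) with hm
  have hm0 : 0 < m := Real.rpow_pos_of_pos hD0 _
  have hm1 : m ≤ 1 := Real.rpow_le_one_of_one_le_of_nonpos (by exact_mod_cast hD) (by linarith)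
  set κ : ℝ := ξ * m / A with hκ
  have hκ0 : 0 < κ := by positivity
  set c : ℝ := (D:ℝ)/α with hc
  have hc0 : 0 < c := by positivity
  -- sup bound on φ
  have hφ0 : ∀ x, |φ x| ≤ A/2 := by
    intro x
    by_cases hx : φ x = 0
    · rw [hx, abs_zero]; linarith
    · have hx' : x ∈ tsupport φ := subset_tsupport φ (Function.mem_support.mpr hx)
      have hxI := hsupp hx'
      have h14 : φ (1/4 : ℝ) = 0 := by
        apply image_eq_zero_of_notMem_tsupport
        intro hmem
        have := hsupp hmem
        simp only [Set.mem_Ioo] at this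
        linarith [this.1]
      have hder : ∀ y ∈ (Set.univ : Set ℝ), DifferentiableAt ℝ φ y :=
        fun y _ => (hφ.differentiable (by simp)) y
      have hdb : ∀ y ∈ (Set.univ : Set ℝ), ‖deriv φ y‖ ≤ A := by
        intro y _
        have h1 := hA2 1 (Nat.le_add_left 1 _) y
        rw [iteratedDeriv_one] at h1
        rwa [Real.norm_eq_abs]
      have hmvt := Convex.norm_image_sub_le_of_norm_deriv_le hder hdb convex_univ
        (Set.mem_univ (1/4 : ℝ)) (Set.mem_univ x)
      rw [h14, sub_zero, Real.norm_eq_abs, Real.norm_eq_abs] at hmvt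
      simp only [Set.mem_Ioo] at hxI
      have hxd : |x - 1/4| ≤ 1/2 := by
        rw [abs_le]; constructor <;> linarith [hxI.1, hxI.2]
      calc |φ x| ≤ A * |x - 1/4| := hmvt
      _ ≤ A * (1/2) := mul_le_mul_of_nonneg_left hxd (le_of_lt hA0)
      _ = A/2 := by ring
  -- membership facts
  have hmem : ∀ (j : Fin D) x, φ (c*(x+α/2) - (j:ℝ)) ≠ 0 →
      c*(x+α/2) - (j:ℝ) ∈ Set.Ioo (1/4 : ℝ) (3/4) :=
    fun j x h => hsupp (subset_tsupport φ (Function.mem_support.mpr h))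
  have huniq : ∀ x (i j : Fin D), φ (c*(x+α/2) - (i:ℝ)) ≠ 0 →
      φ (c*(x+α/2) - (j:ℝ)) ≠ 0 → i = j := by
    intro x i j hi hj
    have h1 := hmem i x hi
    have h2 := hmem j x hj
    simp only [Set.mem_Ioo] at h1 h2
    have hij : ((i:ℕ):ℝ) < ((j:ℕ):ℝ) + 1 := by linarith [h1.1, h2.2]
    have hji : ((j:ℕ):ℝ) < ((i:ℕ):ℝ) + 1 := by linarith [h2.1, h1.2]
    have hij' : (i:ℕ) < (j:ℕ) + 1 := by exact_mod_cast hij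
    have hji' : (j:ℕ) < (i:ℕ) + 1 := by exact_mod_cast hji
    exact Fin.ext (by omega)
  have hflat : ∀ x (j : Fin D), φ (c*(x+α/2) - (j:ℝ)) ≠ 0 → ω x = 2*ξ := by
    intro x j hj
    have h1 := hmem j x hj
    simp only [Set.mem_Ioo] at h1
    have hjD : ((j:ℕ):ℝ) ≤ (D:ℝ) - 1 := by
      have h2 : (j:ℕ) + 1 ≤ D := j.isLt
      have h3 : ((j:ℕ):ℝ) + 1 ≤ (D:ℝ) := by exact_mod_cast h2
      linarith
    have hj0 : (0:ℝ) ≤ ((j:ℕ):ℝ) := Nat.cast_nonneg _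
    have hu1 : 0 < c * (x + α/2) := by linarith [h1.1]
    have hu2 : c * (x + α/2) < (D:ℝ) := by linarith [h1.2]
    have hx1 : 0 < x + α/2 := by
      by_contra hcon
      push_neg at hcon
      nlinarith
    have hx2 : x + α/2 < α := by
      have hca : c * α = (D:ℝ) := by
        rw [hc]; field_simp
      nlinarith
    exact hωflat x ⟨by linarith, by linarith⟩
  -- coefficients
  set d : Fin D → ℝ := fun j => 2 * ((θ j : ℕ) : ℝ) - 2 * ((θ' j : ℕ) : ℝ) with hd
  set g : Fin D → ℝ → ℝ := fun j x => φ (c*(x+α/2) - (j:ℝ)) with hg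
  set s := fTheta α ξ β A φ ω D θ with hs
  set t := fTheta α ξ β A φ ω D θ' with ht
  have hsx : ∀ x, s x = ω x + ∑ j : Fin D, (2 * ((θ j : ℕ) : ℝ) - 1) * (κ * g j x) := by
    intro x
    rw [hs]
    simp only [fTheta, hg, hκ, hm, hc]
  have htx : ∀ x, t x = ω x + ∑ j : Fin D, (2 * ((θ' j : ℕ) : ℝ) - 1) * (κ * g j x) := by
    intro x
    rw [ht]
    simp only [fTheta, hg, hκ, hm, hc]
  have hst : ∀ x, s x - t x = ∑ j : Fin D, d j * (κ * g j x) := by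
    intro x
    rw [hsx x, htx x, add_sub_add_left_eq_sub, ← Finset.sum_sub_distrib]
    apply Finset.sum_congr rfl
    intro j _
    rw [hd]
    ring
  -- pointwise bound
  set R : ℝ → ℝ := fun x => (∑ j : Fin D, d j * (κ * g j x))
      + 5/(16*ξ) * (∑ j : Fin D, d j * (κ * g j x))^2 with hR
  have hpt : ∀ x, s x * Real.log (s x / t x) ≤ R x := by
    intro x
    rw [hR]
    simp only
    by_cases hne : ∃ j : Fin D, θ j ≠ θ' j ∧ g j x ≠ 0
    · obtain ⟨j, hθj, hφj⟩ := hne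
      have hω2 : ω x = 2*ξ := hflat x j hφj
      have hzero : ∀ b : Fin D, b ≠ j → g b x = 0 := by
        intro b hb
        by_contra hb0
        exact hb (huniq x b j hb0 hφj)
      have hsum : ∀ (τ : Fin D → Fin 2),
          (∑ i : Fin D, (2*((τ i:ℕ):ℝ)-1) * (κ * g i x))
            = (2*((τ j:ℕ):ℝ)-1) * (κ * g j x) := by
        intro τ
        apply Finset.sum_eq_single_of_mem j (Finset.mem_univ j)
        intro b _ hb
        rw [hzero b hb, mul_zero, mul_zero]
      have ha2 : (θ j : ℕ) < 2 := (θ j).isLt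
      have hb2 : (θ' j : ℕ) < 2 := (θ' j).isLt
      have hab : (θ j : ℕ) ≠ (θ' j : ℕ) := fun hcon => hθj (Fin.ext hcon)
      have habn : (θ j : ℕ) + (θ' j : ℕ) = 1 := by omega
      have habr : ((θ j:ℕ):ℝ) + ((θ' j:ℕ):ℝ) = 1 := by exact_mod_cast habn
      set v := (2*((θ j:ℕ):ℝ)-1) * (κ * g j x) with hv
      have hsv : s x = 2*ξ + v := by rw [hsx x, hω2, hsum θ]
      have htv : t x = 2*ξ - v := by
        rw [htx x, hω2, hsum θ']
        have hflip : (2*((θ' j:ℕ):ℝ)-1) = -(2*((θ j:ℕ):ℝ)-1) := by linarith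
        rw [hflip, hv]
        ring
      have hvb : |v| ≤ ξ/2 := by
        rw [hv, abs_mul, abs_mul]
        have h1 : |2*((θ j:ℕ):ℝ)-1| = 1 := by
          have h2 : (θ j:ℕ) = 0 ∨ (θ j:ℕ) = 1 := by omega
          rcases h2 with h | h <;> rw [h] <;> norm_num
        rw [h1, one_mul, abs_of_pos hκ0]
        have h2 : |g j x| ≤ A/2 := hφ0 _
        have hAe : κ * (A/2) = ξ * m / 2 := by
          rw [hκ]; field_simp
        calc κ * |g j x| ≤ κ * (A/2) := mul_le_mul_of_nonneg_left h2 (le_of_lt hκ0)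
        _ = ξ * m / 2 := hAe
        _ ≤ ξ/2 := by nlinarith
      have hdsum : (∑ i : Fin D, d i * (κ * g i x)) = 2*v := by
        rw [← hst x, hsv, htv]; ring
      rw [hdsum, hsv, htv]
      calc (2*ξ+v) * Real.log ((2*ξ+v)/(2*ξ-v)) ≤ 2*v + 5/(4*ξ)*v^2 := ptwise ξ v hξ hvb
      _ = 2*v + 5/(16*ξ)*(2*v)^2 := by ring
    · push_neg at hne
      have hst0 : s x = t x := by
        rw [hsx x, htx x]
        congr 1
        apply Finset.sum_congr rfl
        intro i _
        by_cases hi : θ i = θ' i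
        · rw [hi]
        · simp [hne i hi]
      have hd0 : (∑ i : Fin D, d i * (κ * g i x)) = 0 := by
        rw [← hst x, hst0, sub_self]
      rw [hd0, hst0]
      by_cases h0 : t x = 0
      · simp [h0]
      · rw [div_self h0, Real.log_one, mul_zero]
        norm_num
  -- integrability of the pieces
  have hgcont : ∀ j : Fin D, Continuous (g j) := by
    intro j
    exact hφ.continuous.comp
      ((continuous_const.mul (continuous_id.add continuous_const)).sub continuous_const)
  have hgsuppsub : ∀ j : Fin D, Function.support (g j) ⊆
      Set.Icc ((1/4 + (j:ℝ))/c - α/2) ((3/4 + (j:ℝ))/c - α/2) := by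
    intro j x hx
    have h1 := hmem j x hx
    simp only [Set.mem_Ioo] at h1
    constructor
    · have h2 : (1/4 + (j:ℝ))/c < x + α/2 := by
        rw [div_lt_iff₀ hc0]
        nlinarith [h1.1]
      linarith
    · have h2 : x + α/2 < (3/4 + (j:ℝ))/c := by
        rw [lt_div_iff₀ hc0]
        nlinarith [h1.2]
      linarith
  have hgHCS : ∀ j : Fin D, HasCompactSupport (g j) := by
    intro j
    apply IsCompact.of_isClosed_subset isCompact_Icc (isClosed_tsupport _)
    exact closure_minimal (hgsuppsub j) isClosed_Icc
  have hgint : ∀ j : Fin D, Integrable (g j) :=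
    fun j => (hgcont j).integrable_of_hasCompactSupport (hgHCS j)
  have hg2HCS : ∀ j : Fin D, HasCompactSupport (fun x => (g j x)^2) := by
    intro j
    have hsub2 : Function.support (fun x => (g j x)^2) ⊆
        Set.Icc ((1/4 + (j:ℝ))/c - α/2) ((3/4 + (j:ℝ))/c - α/2) := by
      intro x hx
      apply hgsuppsub j
      simp only [Function.mem_support] at hx ⊢
      exact fun h0 => hx (by rw [h0]; ring)
    exact IsCompact.of_isClosed_subset isCompact_Icc (isClosed_tsupport _)
      (closure_minimal hsub2 isClosed_Icc)
  have hg2int : ∀ j : Fin D, Integrable (fun x => (g j x)^2) :=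
    fun j => ((hgcont j).pow 2).integrable_of_hasCompactSupport (hg2HCS j)
  -- values of the integrals
  have hcinv : |c⁻¹| = α / (D:ℝ) := by
    rw [abs_of_pos (inv_pos.mpr hc0), hc, inv_div]
  have haffine : ∀ (j : Fin D) x, c*(x+α/2) - (j:ℝ) = c*x + (c*(α/2) - (j:ℝ)) := by
    intro j x; ring
  have hIg : ∀ j : Fin D, ∫ x, g j x = 0 := by
    intro j
    rw [hg]
    simp only
    simp_rw [haffine j]
    rw [int_comp_affine φ c (c*(α/2) - (j:ℝ)), hint, mul_zero]
  have hIg2 : ∀ j : Fin D, ∫ x, (g j x)^2 = α / (D:ℝ) := by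
    intro j
    rw [hg]
    simp only
    simp_rw [haffine j]
    rw [int_comp_affine (fun y => (φ y)^2) c (c*(α/2) - (j:ℝ)), hsq, mul_one, hcinv]
  -- Δ and its integrals
  set Δ : ℝ → ℝ := fun x => ∑ j : Fin D, d j * (κ * g j x) with hΔ
  have hΔint : Integrable Δ := by
    rw [hΔ]
    apply integrable_finset_sum
    intro j _
    exact (((hgint j).const_mul κ).const_mul (d j))
  have hΔsq : ∀ x, (Δ x)^2 = ∑ j : Fin D, (d j * κ)^2 * (g j x)^2 := by
    intro x
    rw [hΔ]
    simp only
    rw [sum_sq_of_unique (fun j => d j * (κ * g j x))]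
    · apply Finset.sum_congr rfl
      intro j _
      ring
    · intro i j hi hj
      apply huniq x i j
      · intro h0
        apply hi
        simp only [hg] at h0 ⊢
        rw [h0, mul_zero, mul_zero]
      · intro h0
        apply hj
        simp only [hg] at h0 ⊢
        rw [h0, mul_zero, mul_zero]
  have hΔsqint : Integrable (fun x => (Δ x)^2) := by
    have : (fun x => (Δ x)^2) = fun x => ∑ j : Fin D, (d j * κ)^2 * (g j x)^2 :=
      funext hΔsq
    rw [this]
    apply integrable_finset_sum
    intro j _
    exact (hg2int j).const_mul _
  have hIΔ : ∫ x, Δ x = 0 := by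
    rw [hΔ]
    simp only
    rw [integral_finset_sum _ (fun j _ => ((hgint j).const_mul κ).const_mul (d j))]
    apply Finset.sum_eq_zero
    intro j _
    rw [integral_const_mul, integral_const_mul, hIg j, mul_zero, mul_zero]
  have hd4 : ∀ j : Fin D, (d j)^2 ≤ 4 := by
    intro j
    have ha2 : (θ j : ℕ) < 2 := (θ j).isLt
    have hb2 : (θ' j : ℕ) < 2 := (θ' j).isLt
    have ha : ((θ j:ℕ):ℝ) ≤ 1 := by exact_mod_cast Nat.lt_succ_iff.mp ha2
    have hb : ((θ' j:ℕ):ℝ) ≤ 1 := by exact_mod_cast Nat.lt_succ_iff.mp hb2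
    have ha0 : (0:ℝ) ≤ ((θ j:ℕ):ℝ) := Nat.cast_nonneg _
    have hb0 : (0:ℝ) ≤ ((θ' j:ℕ):ℝ) := Nat.cast_nonneg _
    have hdj : d j = 2*((θ j:ℕ):ℝ) - 2*((θ' j:ℕ):ℝ) := rfl
    rw [hdj]
    nlinarith
  have hIΔsq : ∫ x, (Δ x)^2 ≤ 4 * κ^2 * α := by
    have heq : (fun x => (Δ x)^2) = fun x => ∑ j : Fin D, (d j * κ)^2 * (g j x)^2 :=
      funext hΔsq
    rw [heq, integral_finset_sum _ (fun j _ => (hg2int j).const_mul _)]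
    have hstep : ∀ j : Fin D, (∫ x, (d j * κ)^2 * (g j x)^2) ≤ 4 * κ^2 * (α / (D:ℝ)) := by
      intro j
      rw [integral_const_mul, hIg2 j]
      have h1 : (d j * κ)^2 ≤ 4 * κ^2 := by
        have := hd4 j
        nlinarith [sq_nonneg (d j), sq_nonneg κ]
      apply mul_le_mul_of_nonneg_right h1 (by positivity)
      |>.trans (le_of_eq (by ring))
    calc (∑ j : Fin D, ∫ x, (d j * κ)^2 * (g j x)^2)
        ≤ ∑ j : Fin D, 4 * κ^2 * (α / (D:ℝ)) := Finset.sum_le_sum (fun j _ => hstep j)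
    _ = (D:ℝ) * (4 * κ^2 * (α / (D:ℝ))) := by
        rw [Finset.sum_const, Finset.card_univ, Fintype.card_fin, nsmul_eq_mul]
    _ = 4 * κ^2 * α := by
        field_simp
  -- assembly
  have hm2 : m^2 = (D:ℝ) ^ (-(2*β)) := by
    rw [hm, pow_two, ← Real.rpow_add hD0]
    congr 1
    ring
  by_cases hInt : Integrable (fun x => s x * Real.log (s x / t x))
  · have hRint : Integrable R := by
      rw [hR]
      exact hΔint.add (hΔsqint.const_mul _)
    have hmain : (∫ x, s x * Real.log (s x / t x)) ≤ ∫ x, R x :=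
      integral_mono hInt hRint hpt
    have hRval : (∫ x, R x) ≤ 5 * ξ * α / (4 * A ^ 2) * (D:ℝ) ^ (-(2*β)) := by
      have hRsplit : (∫ x, R x) = (∫ x, Δ x) + 5/(16*ξ) * ∫ x, (Δ x)^2 := by
        rw [hR]
        rw [integral_add hΔint (hΔsqint.const_mul _), integral_const_mul]
      rw [hRsplit, hIΔ, zero_add]
      have h1 : 5/(16*ξ) * (∫ x, (Δ x)^2) ≤ 5/(16*ξ) * (4 * κ^2 * α) :=
        mul_le_mul_of_nonneg_left hIΔsq (by positivity)
      refine h1.trans (le_of_eq ?_)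
      rw [hκ, ← hm2]
      field_simp
      ring
    show KLdiv s t ≤ _
    rw [KLdiv]
    exact hmain.trans hRval
  · show KLdiv s t ≤ _
    rw [KLdiv]
    rw [integral_undef hInt]
    have h1 : (0:ℝ) < (D:ℝ) ^ (-(2*β)) := Real.rpow_pos_of_pos hD0 _
    positivity
end

section
/- For every j ∈ {0,…,r} and every n ∈ ℤ there exists a finite constant l⁺_{j,n} > 0, depending only on β, γ, l⁺ and L, such that every strictly positive density f on ℝ for which ln f is r times differentiable, |(ln f)^{(r)}(x) − (ln f)^{(r)}(y)| ≤ r! L(x) |y − x|^{β−r} whenever |y − x| ≤ γ, and |(ln f)^{(j')}(0)| ≤ l⁺ for all j' = 0,…,r, satisfies sup_{y ∈ [nγ, (n+1)γ]} |(ln f)^{(j)}(y)| ≤ l⁺_{j,n}. -/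
/-!
Write `φ = ln f` and `r = rOf β`. On `[-Nγ, Nγ]` the polynomial `L` is bounded, so the Hölder
condition bounds every increment of `φ⁽ʳ⁾` over a step of length at most `γ`; chaining `N` such
steps from `0` and using `|φ⁽ʳ⁾(0)| ≤ l⁺` bounds `φ⁽ʳ⁾` on `[-Nγ, Nγ]`. The mean value theorem
then propagates the bound down to `φ⁽ʲ⁾` for `j < r`, using `|φ⁽ʲ⁾(0)| ≤ l⁺` again. The interval
`[nγ, (n+1)γ]` lies in `[-Nγ, Nγ]` for `N = |n| + 1`, and none of the bounds depends on `f`.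
-/

open MeasureTheory

open Set Finset

theorem rOf_lt {β : ℝ} (hβ : 0 < β) : (rOf β : ℝ) < β := by
  have hceil : 1 ≤ ⌈β⌉₊ := Nat.one_le_ceil_iff.mpr hβ
  have hlt : (⌈β⌉₊ : ℝ) < β + 1 := Nat.ceil_lt_add_one hβ.le
  rw [rOf, Nat.cast_sub hceil, Nat.cast_one]
  linarith

theorem abs_le_natAbs_add_one_mul_of_mem_Icc {n : ℤ} {γ y : ℝ} (hγ : 0 ≤ γ)
    (hy : y ∈ Icc ((n : ℝ) * γ) (((n : ℝ) + 1) * γ)) :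
    |y| ≤ ((n.natAbs + 1 : ℕ) : ℝ) * γ := by
  push_cast
  rw [Nat.cast_natAbs, Int.cast_abs, abs_le]
  constructor <;> nlinarith [hy.1, hy.2, neg_abs_le (n : ℝ), le_abs_self (n : ℝ)]

theorem Continuous.exists_nonneg_bound_of_abs_le {ℓ : ℝ → ℝ} (hℓ : Continuous ℓ) (R : ℝ) :
    ∃ S, 0 ≤ S ∧ ∀ x, |x| ≤ R → ℓ x ≤ S := by
  obtain ⟨C, hC⟩ := (isCompact_Icc (a := -R) (b := R)).exists_bound_of_continuousOn
    hℓ.continuousOn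
  exact ⟨max C 0, le_max_right _ _, fun x hx =>
    (le_abs_self _).trans ((hC x (abs_le.1 hx)).trans (le_max_left _ _))⟩

theorem abs_sub_le_mul_of_forall_abs_sub_le {g : ℝ → ℝ} {γ M : ℝ} (N : ℕ)
    (hg : ∀ x, |x| ≤ N * γ → ∀ x', |x' - x| ≤ γ → |g x' - g x| ≤ M)
    {y : ℝ} (hy : |y| ≤ N * γ) : |g y - g 0| ≤ N * M := by
  rcases N.eq_zero_or_pos with rfl | hN
  · simp_all
  have hN' : (0 : ℝ) < N := by exact_mod_cast hN
  have hstep : |y / N| ≤ γ := by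
    rw [abs_div, Nat.abs_cast, div_le_iff₀ hN']
    linarith
  let X : ℕ → ℝ := fun i => i * (y / N)
  have hX : ∀ i ∈ range N, |g (X (i + 1)) - g (X i)| ≤ M := by
    intro i hi
    have hiN : (i : ℝ) ≤ N := by exact_mod_cast (mem_range.mp hi).le
    refine hg _ ?_ _ ?_
    · rw [abs_mul, Nat.abs_cast]
      exact mul_le_mul hiN hstep (abs_nonneg _) hN'.le
    · simpa [X, add_mul] using hstep
  calc |g y - g 0| = |∑ i ∈ range N, (g (X (i + 1)) - g (X i))| := by
        rw [sum_range_sub (fun i => g (X i))]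
        simp [X, mul_div_cancel₀ y hN'.ne']
    _ ≤ ∑ i ∈ range N, |g (X (i + 1)) - g (X i)| := abs_sum_le_sum_abs _ _
    _ ≤ ∑ _i ∈ range N, M := sum_le_sum hX
    _ = N * M := by simp

theorem abs_le_of_holder {G ℓ : ℝ → ℝ} {K e γ S c : ℝ} (N : ℕ) (hK : 0 ≤ K) (he : 0 ≤ e)
    (hS0 : 0 ≤ S) (hℓ : ∀ x, |x| ≤ N * γ → ℓ x ≤ S)
    (hG : ∀ x x', |x' - x| ≤ γ → |G x - G x'| ≤ K * ℓ x * |x' - x| ^ e)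
    (hG0 : |G 0| ≤ c) {y : ℝ} (hy : |y| ≤ N * γ) :
    |G y| ≤ c + N * (K * S * γ ^ e) := by
  have hincr := abs_sub_le_mul_of_forall_abs_sub_le N (g := G) (M := K * S * γ ^ e)
    (fun x hx x' hx' => calc
      |G x' - G x| = |G x - G x'| := abs_sub_comm _ _
      _ ≤ K * ℓ x * |x' - x| ^ e := hG x x' hx'
      _ ≤ K * S * γ ^ e := by
        gcongr
        exact hℓ x hx) hy
  linarith [abs_sub_abs_le_abs_sub (G y) (G 0)]

theorem abs_le_abs_zero_add_mul_of_abs_deriv_le {g : ℝ → ℝ} {R b y : ℝ}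
    (hg : Differentiable ℝ g) (hg' : ∀ x, |x| ≤ R → |deriv g x| ≤ b) (hy : |y| ≤ R) :
    |g y| ≤ |g 0| + R * b := by
  have hR : 0 ≤ R := (abs_nonneg y).trans hy
  have hb : 0 ≤ b := (abs_nonneg _).trans (hg' 0 (by simpa using hR))
  have hmvt := (convex_Icc (-R) R).norm_image_sub_le_of_norm_deriv_le
    (fun x _ => hg.differentiableAt) (fun x hx => hg' x (abs_le.2 hx))
    (x := 0) (y := y) ⟨by linarith, hR⟩ (abs_le.1 hy)
  rw [Real.norm_eq_abs, Real.norm_eq_abs, sub_zero] at hmvt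
  nlinarith [abs_sub_abs_le_abs_sub (g y) (g 0)]

/-- Bound on the derivative of order `r - k` on `[-R, R]`, given the bound `B` on the order-`r`
derivative there and the bound `c` on all derivatives at `0`. -/
def iterBound (c R B : ℝ) : ℕ → ℝ
  | 0 => B
  | k + 1 => c + R * iterBound c R B k

theorem iterBound_pos {c R B : ℝ} (hc : 0 < c) (hR : 0 ≤ R) (hB : 0 < B) :
    ∀ k, 0 < iterBound c R B k
  | 0 => hB
  | k + 1 => by
    have := iterBound_pos hc hR hB k
    rw [iterBound]
    positivity

theorem abs_iteratedDeriv_le_iterBound {φ : ℝ → ℝ} {r : ℕ} {c R B : ℝ}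
    (hdiff : ∀ i < r, Differentiable ℝ (iteratedDeriv i φ))
    (h0 : ∀ i ≤ r, |iteratedDeriv i φ 0| ≤ c)
    (htop : ∀ x, |x| ≤ R → |iteratedDeriv r φ x| ≤ B) :
    ∀ k ≤ r, ∀ y, |y| ≤ R → |iteratedDeriv (r - k) φ y| ≤ iterBound c R B k
  | 0, _ => by simpa [iterBound] using htop
  | k + 1, hk => fun y hy => by
    have hderiv : deriv (iteratedDeriv (r - (k + 1)) φ) = iteratedDeriv (r - k) φ := by
      rw [← iteratedDeriv_succ]
      congr 1
      omega
    calc |iteratedDeriv (r - (k + 1)) φ y|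
        ≤ |iteratedDeriv (r - (k + 1)) φ 0| + R * iterBound c R B k :=
          abs_le_abs_zero_add_mul_of_abs_deriv_le (hdiff _ (by omega))
            (fun x hx => hderiv ▸
              abs_iteratedDeriv_le_iterBound hdiff h0 htop k (by omega) x hx) hy
      _ ≤ iterBound c R B (k + 1) := by
        rw [iterBound]
        gcongr
        exact h0 _ (Nat.sub_le _ _)

/-- Lemma 11: uniform bounds on the derivatives of `ln f` on the intervals
`[nγ, (n+1)γ]`, depending only on `β, γ, l⁺, L`, over all strictly positive densities `f`
satisfying the smoothness conditions. -/
theorem stmt14 (β : ℝ) (hβ : 0 < β) (γ lp : ℝ) (hγ : 0 < γ) (hlp : 0 < lp)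
    (L : Polynomial ℝ) :
    ∀ j ≤ rOf β, ∀ n : ℤ, ∃ b : ℝ, 0 < b ∧
      ∀ f : ℝ → ℝ, (∀ x, 0 < f x) → Integrable f → (∫ x, f x) = 1 →
        (∀ i < rOf β, Differentiable ℝ (iteratedDeriv i fun x => Real.log (f x))) →
        (∀ x y : ℝ, |y - x| ≤ γ →
          |iteratedDeriv (rOf β) (fun z => Real.log (f z)) x -
            iteratedDeriv (rOf β) (fun z => Real.log (f z)) y| ≤
              (Nat.factorial (rOf β) : ℝ) * L.eval x * |y - x| ^ (β - (rOf β : ℝ))) →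
        (∀ j' ≤ rOf β, |iteratedDeriv j' (fun z => Real.log (f z)) 0| ≤ lp) →
        ∀ y ∈ Set.Icc ((n : ℝ) * γ) (((n : ℝ) + 1) * γ),
          |iteratedDeriv j (fun z => Real.log (f z)) y| ≤ b := by
  intro j hj n
  obtain ⟨S, hS0, hS⟩ := L.continuous.exists_nonneg_bound_of_abs_le ((n.natAbs + 1 : ℕ) * γ)
  have he : 0 < β - rOf β := sub_pos.2 (rOf_lt hβ)
  have hB : 0 < lp + (n.natAbs + 1 : ℕ) * ((rOf β).factorial * S * γ ^ (β - rOf β)) := by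
    positivity
  refine ⟨_, iterBound_pos hlp (R := (n.natAbs + 1 : ℕ) * γ) (by positivity) hB (rOf β - j), ?_⟩
  intro f _ _ _ hdiff hHolder h0 y hy
  have htop := fun x (hx : |x| ≤ _) =>
    abs_le_of_holder _ (by positivity) he.le hS0 hS hHolder (h0 _ le_rfl) hx
  have hbound := abs_iteratedDeriv_le_iterBound hdiff h0 htop (rOf β - j) (Nat.sub_le _ _) y
    (abs_le_natAbs_add_one_mul_of_mem_Icc hγ.le hy)
  rwa [Nat.sub_sub_self hj] at hbound
end

section
/- For every integer i ≥ 1 there exists a map ρ : Ξ_i → ℝ such that for every i-times continuously differentiable strictly positive function t : ℝ → ℝ and every x ∈ ℝ: (ln t)^{(i)}(x) = t(x)^{−2^{i−1}} Σ_{(η_0,…,η_i) ∈ Ξ_i} ρ(η_0,…,η_i) Π_{j=0}^i (t^{(j)}(x))^{η_j}. -/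
/-!
Write `X j` for `t^{(j)}` and let `D` be the derivation of `ℝ[X₀, X₁, …]` sending `X j` to
`X (j + 1)`, so that `(P(t, t', …))' = (D P)(t, t', …)`. The quotient rule gives
`(ln t)^{(n+1)} = P_n(t, t', …) / t^{n+1}` with `P_0 = X 1` and
`P_{n+1} = X 0 · D P_n - (n + 1) X 1 · P_n`. Since `D` keeps the degree and raises the weight
`Σ j η_j` by one, `P_n` is homogeneous of degree `n + 1` and weight `n + 1`. As `n + 1 ≤ 2^n`,
multiplying numerator and denominator by `t^{2^n - (n+1)}` gives the form of the theorem.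
-/

open MvPolynomial Finset

def isobaricExponents (d w : ℕ) : Finset (Fin (w + 1) → ℕ) :=
  (Finset.Nat.antidiagonalTuple (w + 1) d).filter fun η => ∑ j : Fin (w + 1), (j : ℕ) * η j = w

lemma mem_isobaricExponents {d w : ℕ} {η : Fin (w + 1) → ℕ} :
    η ∈ isobaricExponents d w ↔ ∑ j, η j = d ∧ ∑ j : Fin (w + 1), (j : ℕ) * η j = w := by
  simp [isobaricExponents, Finset.Nat.mem_antidiagonalTuple]

namespace MvPolynomial

variable {R : Type*} [CommSemiring R]

/-- `X j` stands for the `j`-th derivative; its weight records (degree, order), so that a single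
weighted-homogeneity condition prescribes both `Σ η_j` and `Σ j η_j`. -/
def jetWeight (j : ℕ) : ℕ × ℕ := (1, j)

variable (R) in
noncomputable def jetDeriv : Derivation R (MvPolynomial ℕ R) (MvPolynomial ℕ R) :=
  mkDerivation R fun j => X (j + 1)

@[simp]
lemma jetDeriv_X (j : ℕ) : jetDeriv R (X j) = X (j + 1) :=
  mkDerivation_X R _ j

lemma weight_jetWeight (m : ℕ →₀ ℕ) :
    Finsupp.weight jetWeight m = (m.sum fun _ c => c, m.sum fun j c => c * j) := by
  ext <;> simp [Finsupp.weight_apply, Finsupp.sum, Prod.fst_sum, Prod.snd_sum, jetWeight]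

lemma le_of_mem_support_of_weight_eq {m : ℕ →₀ ℕ} {d w : ℕ}
    (hm : Finsupp.weight jetWeight m = (d, w)) {j : ℕ} (hj : j ∈ m.support) : j ≤ w := by
  rw [weight_jetWeight, Prod.mk.injEq] at hm
  calc j ≤ m j * j := Nat.le_mul_of_pos_left j (Nat.pos_of_ne_zero (Finsupp.mem_support_iff.1 hj))
    _ ≤ m.sum fun j c => c * j := Finset.single_le_sum (f := fun j => m j * j) (by simp) hj
    _ = w := hm.2

theorem IsWeightedHomogeneous.mem_supported_Iic {p : MvPolynomial ℕ R} {d w : ℕ}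
    (hp : p.IsWeightedHomogeneous jetWeight (d, w)) : p ∈ supported R (Set.Iic w) := by
  rw [mem_supported]
  intro j hj
  obtain ⟨m, hm, hjm⟩ := (mem_vars_iff_mem_support j).1 hj
  exact le_of_mem_support_of_weight_eq (hp (mem_support_iff.1 hm)) hjm

lemma isWeightedHomogeneous_jetDeriv_monomial (m : ℕ →₀ ℕ) :
    (jetDeriv R (monomial m 1)).IsWeightedHomogeneous jetWeight
      (Finsupp.weight jetWeight m + (0, 1)) := by
  induction m using Finsupp.induction with
  | zero => simpa using isWeightedHomogeneous_zero R jetWeight _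
  | single_add j k m _ hk ih =>
    rw [← mul_one (1 : R), ← monomial_mul, ← X_pow_eq_monomial, Derivation.leibniz,
      Derivation.leibniz_pow, jetDeriv_X, smul_eq_mul, smul_eq_mul, smul_eq_mul]
    have hX : (X j ^ k : MvPolynomial ℕ R).IsWeightedHomogeneous jetWeight (k • jetWeight j) :=
      (isWeightedHomogeneous_X R jetWeight j).pow k
    refine IsWeightedHomogeneous.add ?_ ?_
    · convert hX.mul ih using 1
      simp [Finsupp.weight_single, add_assoc]
    · obtain ⟨k, rfl⟩ := Nat.exists_eq_add_one_of_ne_zero hk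
      rw [mul_smul_comm, Nat.add_sub_cancel, ← mem_weightedHomogeneousSubmodule]
      refine nsmul_mem ?_ _
      rw [mem_weightedHomogeneousSubmodule]
      convert (isWeightedHomogeneous_monomial _ m (1 : R) rfl).mul
        (((isWeightedHomogeneous_X R jetWeight j).pow k).mul
          (isWeightedHomogeneous_X R jetWeight (j + 1))) using 1
      ext <;> simp only [map_add, Finsupp.weight_single, jetWeight, Prod.smul_mk, smul_eq_mul,
        Prod.fst_add, Prod.snd_add] <;> ring

theorem IsWeightedHomogeneous.jetDeriv {p : MvPolynomial ℕ R} {m : ℕ × ℕ}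
    (hp : p.IsWeightedHomogeneous jetWeight m) :
    (jetDeriv R p).IsWeightedHomogeneous jetWeight (m + (0, 1)) := by
  induction hp using IsWeightedHomogeneous.induction_on with
  | zero => simpa using isWeightedHomogeneous_zero R jetWeight _
  | add p q _ _ hp hq => simpa using hp.add hq
  | monomial m r hm =>
    rw [← hm, ← mul_one r, ← smul_eq_mul, ← smul_monomial, Derivation.map_smul, smul_eq_C_mul]
    exact (isWeightedHomogeneous_jetDeriv_monomial m).C_mul r

theorem IsWeightedHomogeneous.exists_eval_eq_sum_isobaricExponents {p : MvPolynomial ℕ R}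
    {d w : ℕ} (hp : p.IsWeightedHomogeneous jetWeight (d, w)) :
    ∃ ρ : (Fin (w + 1) → ℕ) → R, ∀ v : ℕ → R,
      eval v p = ∑ η ∈ isobaricExponents d w, ρ η * ∏ j : Fin (w + 1), v j ^ η j := by
  induction hp using IsWeightedHomogeneous.induction_on with
  | zero => exact ⟨0, by simp⟩
  | add p q _ _ hp hq =>
    obtain ⟨ρ, hρ⟩ := hp
    obtain ⟨σ, hσ⟩ := hq
    exact ⟨ρ + σ, fun v => by simp [hρ, hσ, add_mul, sum_add_distrib]⟩
  | monomial m r hm =>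
    have hsupp : m.support ⊆ range (w + 1) := fun j hj =>
      mem_range.2 (Nat.lt_succ_of_le (le_of_mem_support_of_weight_eq hm hj))
    have hmem : (fun j : Fin (w + 1) => m j) ∈ isobaricExponents d w := by
      rw [weight_jetWeight, Prod.mk.injEq, Finsupp.sum_of_support_subset _ hsupp _ (by simp),
        Finsupp.sum_of_support_subset _ hsupp _ (by simp), sum_range, sum_range] at hm
      simpa [mem_isobaricExponents, mul_comm] using hm
    refine ⟨Pi.single (fun j : Fin (w + 1) => m j) r, fun v => ?_⟩
    rw [sum_eq_single_of_mem _ hmem (fun η _ hη => by simp [hη]), eval_monomial,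
      Finsupp.prod_of_support_subset _ hsupp _ (by simp), prod_range (fun j => v j ^ m j)]
    simp

end MvPolynomial

noncomputable def jet (t : ℝ → ℝ) (y : ℝ) (j : ℕ) : ℝ := iteratedDeriv j t y

theorem hasDerivAt_eval_jet {t : ℝ → ℝ} {x : ℝ} {s : Set ℕ}
    (ht : ∀ j ∈ s, DifferentiableAt ℝ (iteratedDeriv j t) x) {p : MvPolynomial ℕ ℝ}
    (hp : p ∈ supported ℝ s) :
    HasDerivAt (fun y => eval (jet t y) p) (eval (jet t x) (jetDeriv ℝ p)) x := by
  rw [supported_eq_adjoin_X] at hp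
  induction hp using Algebra.adjoin_induction with
  | mem q hq =>
    obtain ⟨j, hj, rfl⟩ := hq
    simpa [jet, iteratedDeriv_succ] using (ht j hj).hasDerivAt
  | algebraMap r => simpa using hasDerivAt_const x r
  | add p q _ _ hp hq => simpa using hp.fun_add hq
  | mul p q _ _ hp hq => simpa [Derivation.leibniz, add_comm, mul_comm] using hp.fun_mul hq

noncomputable def logDerivNumerator : ℕ → MvPolynomial ℕ ℝ
  | 0 => X 1
  | n + 1 => X 0 * jetDeriv ℝ (logDerivNumerator n) - (n + 1) • (X 1 * logDerivNumerator n)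

lemma isWeightedHomogeneous_logDerivNumerator (n : ℕ) :
    (logDerivNumerator n).IsWeightedHomogeneous jetWeight (n + 1, n + 1) := by
  induction n with
  | zero => exact isWeightedHomogeneous_X ℝ jetWeight 1
  | succ n ih =>
    refine IsWeightedHomogeneous.sub ?_ ?_
    · rw [show (n + 1 + 1, n + 1 + 1) = jetWeight 0 + ((n + 1, n + 1) + (0, 1)) by
        simp only [jetWeight, Prod.mk_add_mk, Prod.mk.injEq]; omega]
      exact (isWeightedHomogeneous_X ℝ jetWeight 0).mul ih.jetDeriv
    · rw [← mem_weightedHomogeneousSubmodule]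
      refine nsmul_mem ?_ _
      rw [mem_weightedHomogeneousSubmodule,
        show (n + 1 + 1, n + 1 + 1) = jetWeight 1 + (n + 1, n + 1) by
          simp only [jetWeight, Prod.mk_add_mk, Prod.mk.injEq]; omega]
      exact (isWeightedHomogeneous_X ℝ jetWeight 1).mul ih

theorem iteratedDeriv_log_comp {n : ℕ} {t : ℝ → ℝ} (ht : ContDiff ℝ (n + 1) t)
    (hpos : ∀ x, 0 < t x) :
    iteratedDeriv (n + 1) (fun y => Real.log (t y)) =
      fun x => eval (jet t x) (logDerivNumerator n) / t x ^ (n + 1) := by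
  have ht' : ∀ x, HasDerivAt t (jet t x 1) x := fun x => by
    simpa [jet] using (ht.differentiable (by simp) x).hasDerivAt
  induction n with
  | zero => funext x; simpa [logDerivNumerator, jet] using ((ht' x).log (hpos x).ne').deriv
  | succ n ih =>
    funext x
    have hnum := hasDerivAt_eval_jet (x := x)
      (fun j (hj : j ≤ n + 1) =>
        ht.differentiable_iteratedDeriv j (by exact_mod_cast Nat.lt_succ_of_le hj) x)
      (isWeightedHomogeneous_logDerivNumerator n).mem_supported_Iic
    rw [iteratedDeriv_succ, ih (ht.of_le (by norm_num)),
      (hnum.fun_div ((ht' x).fun_pow (n + 1)) (pow_pos (hpos x) _).ne').deriv]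
    have ht0 : t x ≠ 0 := (hpos x).ne'
    simp only [logDerivNumerator, jet, map_sub, map_mul, map_add, map_one, map_natCast, eval_X,
      nsmul_eq_mul, iteratedDeriv_zero, iteratedDeriv_one, Nat.cast_add, Nat.cast_one,
      add_tsub_cancel_right]
    field_simp
    ring

/-- Lemma 17: for every `i ≥ 1` there is a universal family of coefficients
`ρ : Ξ_i → ℝ`, where `Ξ_i = {η ∈ ℕ^{i+1} : Σ η_j = 2^{i−1}, Σ j η_j = i}`, such that for every
`i`-times continuously differentiable strictly positive `t` and every `x`:
`(ln t)^{(i)}(x) = t(x)^{−2^{i−1}} Σ_{η ∈ Ξ_i} ρ(η) Π_{j=0}^i (t^{(j)}(x))^{η_j}`. -/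
theorem stmt19 (i : ℕ) (hi : 1 ≤ i) :
    ∃ (Ξ : Finset (Fin (i + 1) → ℕ)) (ρ : (Fin (i + 1) → ℕ) → ℝ),
      (∀ η : Fin (i + 1) → ℕ,
        η ∈ Ξ ↔ (∑ j, η j) = 2 ^ (i - 1) ∧ (∑ j : Fin (i + 1), (j : ℕ) * η j) = i) ∧
      ∀ t : ℝ → ℝ, ContDiff ℝ (i : ℕ∞) t → (∀ x, 0 < t x) → ∀ x : ℝ,
        iteratedDeriv i (fun y => Real.log (t y)) x =
          (∑ η ∈ Ξ, ρ η * ∏ j : Fin (i + 1), iteratedDeriv (j : ℕ) t x ^ η j) / t x ^ 2 ^ (i - 1) := by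
  obtain ⟨n, rfl⟩ := Nat.exists_eq_add_of_le' hi
  rw [Nat.add_sub_cancel]
  obtain ⟨k, hk⟩ := Nat.exists_eq_add_of_le' (Nat.lt_two_pow_self (n := n))
  have hP : (X 0 ^ k * logDerivNumerator n).IsWeightedHomogeneous jetWeight (2 ^ n, n + 1) := by
    rw [hk, show (k + (n + 1), n + 1) = k • jetWeight 0 + (n + 1, n + 1) by
      ext <;> simp [jetWeight]]
    exact ((isWeightedHomogeneous_X ℝ jetWeight 0).pow k).mul
      (isWeightedHomogeneous_logDerivNumerator n)
  obtain ⟨ρ, hρ⟩ := hP.exists_eval_eq_sum_isobaricExponents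
  refine ⟨isobaricExponents _ _, ρ, fun η => mem_isobaricExponents, fun t ht hpos x => ?_⟩
  have ht0 : t x ≠ 0 := (hpos x).ne'
  change _ = (∑ η ∈ _, ρ η * ∏ j : Fin (n + 1 + 1), jet t x j ^ η j) / _
  rw [iteratedDeriv_log_comp (by exact_mod_cast ht) hpos, ← hρ, hk, pow_add]
  simp [jet, mul_div_mul_left _ _ (pow_ne_zero k ht0)]
end
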